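/- Let A be a symmetric positive-definite matrix with spectral decomposition A = ∑ᵢ λᵢ vᵢvᵢᵀ and X an arbitrary matrix. Then the identity D(log)(A)[AX + XA] = 2X holds if and only if X commutes with A, where D(log)(A) is the Fréchet derivative of the matrix logarithm at A. -/

import Mathlib

/-!
In an eigenbasis of `A`, with `Y = Qᵀ X Q`, the derivative multiplies the entry `Y i j` by
`L(λᵢ, λⱼ) (λᵢ + λⱼ)`, where `L` is the divided difference of `log`. This factor is `2`
when `λᵢ = λⱼ` and strictly larger otherwise, because `1 / L(a, b)`, the logarithmic mean
of `a` and `b`, is strictly smaller than their arithmetic mean. So the identity holds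
exactly when `Y` has no entries linking distinct eigenvalues, i.e. when `Y` commutes with
`diagonal λ`.
-/

open Matrix

namespace Real

theorem two_mul_sub_one_div_add_one_lt_log {t : ℝ} (ht : 1 < t) :
    2 * (t - 1) / (t + 1) < log t := by
  have hsum := hasSum_log_one_add (sub_pos.2 ht).le
  rw [add_sub_cancel, show t - 1 + 2 = t + 1 by ring] at hsum
  have := lt_hasSum hsum 0 (fun _ _ => by positivity) 1 one_ne_zero (by positivity)
  simpa [mul_div_assoc] using this

theorem two_mul_sub_lt_log_sub_log_mul_add {a b : ℝ} (hb : 0 < b) (hba : b < a) :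
    2 * (a - b) < (log a - log b) * (a + b) := by
  have ha : 0 < a := hb.trans hba
  have h := two_mul_sub_one_div_add_one_lt_log ((one_lt_div hb).2 hba)
  rwa [log_div ha.ne' hb.ne', show 2 * (a / b - 1) / (a / b + 1) = 2 * (a - b) / (a + b) by
    field_simp, div_lt_iff₀ (by linarith)] at h

end Real

noncomputable def logDivDiff (a b : ℝ) : ℝ :=
  if a = b then a⁻¹ else (Real.log a - Real.log b) / (a - b)

theorem logDivDiff_comm (a b : ℝ) : logDivDiff a b = logDivDiff b a := by
  unfold logDivDiff
  split_ifs with h h' h'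
  · rw [h]
  · exact absurd h.symm h'
  · exact absurd h'.symm h
  · rw [← neg_sub (Real.log a) (Real.log b), ← neg_sub a b, neg_div_neg_eq]

theorem two_lt_logDivDiff_mul_add {a b : ℝ} (ha : 0 < a) (hb : 0 < b) (hab : a ≠ b) :
    2 < logDivDiff a b * (a + b) := by
  wlog hba : b < a generalizing a b
  · rw [logDivDiff_comm, add_comm]
    exact this hb ha hab.symm (lt_of_le_of_ne (not_lt.1 hba) hab)
  rw [logDivDiff, if_neg hab, div_mul_eq_mul_div, lt_div_iff₀ (sub_pos.2 hba)]
  exact Real.two_mul_sub_lt_log_sub_log_mul_add hb hba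

theorem logDivDiff_mul_add_eq_two_iff {a b : ℝ} (ha : 0 < a) (hb : 0 < b) :
    logDivDiff a b * (a + b) = 2 ↔ a = b := by
  refine ⟨fun h => by_contra fun hab => (two_lt_logDivDiff_mul_add ha hb hab).ne' h, ?_⟩
  rintro rfl
  rw [logDivDiff, if_pos rfl]
  field_simp
  ring

namespace Matrix

variable {n R : Type*} [Fintype n] [DecidableEq n]

theorem diagonal_mul_eq_mul_diagonal_iff [CommRing R] [NoZeroDivisors R] {d : n → R}
    {M : Matrix n n R} :
    diagonal d * M = M * diagonal d ↔ ∀ i j, d i ≠ d j → M i j = 0 := by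
  simp only [← Matrix.ext_iff, diagonal_mul, mul_diagonal]
  refine forall₂_congr fun i j => ?_
  rw [mul_comm (M i j), ← sub_eq_zero, ← sub_mul, mul_eq_zero, sub_eq_zero, or_iff_not_imp_left]

theorem of_logDivDiff_mul_eq_two_smul_iff {lam : n → ℝ} (hpos : ∀ i, 0 < lam i)
    (Y : Matrix n n ℝ) :
    (of fun i j => logDivDiff (lam i) (lam j) * (diagonal lam * Y + Y * diagonal lam) i j) =
        (2 : ℝ) • Y ↔ diagonal lam * Y = Y * diagonal lam := by
  rw [diagonal_mul_eq_mul_diagonal_iff, ← Matrix.ext_iff]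
  simp only [of_apply, add_apply, diagonal_mul, mul_diagonal, smul_apply, smul_eq_mul]
  refine forall₂_congr fun i j => ?_
  rw [show logDivDiff (lam i) (lam j) * (lam i * Y i j + Y i j * lam j) =
      logDivDiff (lam i) (lam j) * (lam i + lam j) * Y i j by ring, mul_eq_mul_right_iff,
    logDivDiff_mul_add_eq_two_iff (hpos i) (hpos j), or_iff_not_imp_left]

section Conjugation

variable [CommRing R] {Q : Matrix n n R}

theorem transpose_conj_mul_transpose_conj (hQ : Qᵀ * Q = 1) (M N : Matrix n n R) :
    Qᵀ * M * Q * (Qᵀ * N * Q) = Qᵀ * (M * N) * Q := by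
  calc Qᵀ * M * Q * (Qᵀ * N * Q) = Qᵀ * M * (Q * Qᵀ) * N * Q := by
        simp only [Matrix.mul_assoc]
    _ = Qᵀ * (M * N) * Q := by
        rw [mul_eq_one_comm.mp hQ]
        simp only [Matrix.mul_one, Matrix.mul_assoc]

theorem mul_mul_transpose_eq_iff (hQ : Qᵀ * Q = 1) {M N : Matrix n n R} :
    Q * M * Qᵀ = N ↔ M = Qᵀ * N * Q := by
  have hQ' : Q * Qᵀ = 1 := mul_eq_one_comm.mp hQ
  constructor <;> rintro rfl <;> simp only [← Matrix.mul_assoc, hQ, hQ', Matrix.one_mul] <;>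
    simp only [Matrix.mul_assoc, hQ, hQ', Matrix.mul_one]

theorem transpose_conj_injective (hQ : Qᵀ * Q = 1) :
    Function.Injective fun M : Matrix n n R => Qᵀ * M * Q := by
  intro M N h
  rwa [← mul_mul_transpose_eq_iff hQ, (mul_mul_transpose_eq_iff hQ).2 rfl] at h

end Conjugation

end Matrix

/-- For symmetric positive definite `A` (diagonalised by an orthogonal `Q`),
the Daleckii–Krein derivative of the matrix logarithm satisfies
`D(log)(A)[AX + XA] = 2X` if and only if `X` commutes with `A`. -/
theorem deriv_log_two_iff_commute {d : ℕ}
    (A X Q : Matrix (Fin d) (Fin d) ℝ) (lam : Fin d → ℝ)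
    (hQ : Qᵀ * Q = 1) (hdiag : Qᵀ * A * Q = Matrix.diagonal lam)
    (hpos : ∀ i, 0 < lam i) :
    (Q * (Matrix.of fun i j =>
        (if lam i = lam j then (lam i)⁻¹
          else (Real.log (lam i) - Real.log (lam j)) / (lam i - lam j)) *
        ((Qᵀ * (A * X + X * A) * Q) i j)) * Qᵀ) = (2 : ℝ) • X ↔
      A * X = X * A := by
  rw [mul_mul_transpose_eq_iff hQ, ← (transpose_conj_injective hQ).eq_iff (a := A * X),
    Matrix.mul_add, Matrix.add_mul, Matrix.mul_smul, Matrix.smul_mul,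
    ← transpose_conj_mul_transpose_conj hQ, ← transpose_conj_mul_transpose_conj hQ, hdiag]
  exact of_logDivDiff_mul_eq_two_smul_iff hpos _
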